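/- Let W = (ℚ Wr C) Wr Z with C = ⟨c⟩, Z = ⟨z⟩ infinite cyclic, and let α ∈ (ℚ Wr C)^Z be defined by α(z^j) = 1 for j < 0, α(z⁰) = c, and α(z^j) = τⱼ for j > 0, where τⱼ(cⁱ) = -1/j for i ≥ 0 and 0 for i < 0. Then for every n > 0 and every j ∈ ℤ, the commutator [α^{z^{-n}}, α] evaluated at z^j equals φₙ if j = 0 and 1 otherwise, where φₙ(cⁱ) = 1/n if i = 0 and 0 otherwise. -/

import Mathlib

/-- The action of `B` on the base group `B → A` of the Cartesian wreath
product, so that conjugation by `b` in the wreath product realizes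
`f^b (b₀) = f (b₀ * b⁻¹)`. -/
def wrAct (A B : Type*) [Group A] [Group B] : B →* MulAut (B → A) where
  toFun b :=
    { toFun := fun f x => f (x * b)
      invFun := fun f x => f (x * b⁻¹)
      left_inv := fun f => by funext x; simp [mul_assoc]
      right_inv := fun f => by funext x; simp [mul_assoc]
      map_mul' := fun f g => rfl }
  map_one' := by ext f x; simp
  map_mul' := fun b₁ b₂ => by ext f x; simp [mul_assoc]

/-- The Cartesian (unrestricted) wreath product `A Wr B = B ⋉ A^B`. -/
abbrev Wr (A B : Type*) [Group A] [Group B] : Type _ :=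
  SemidirectProduct (B → A) B (wrAct A B)


open SemidirectProduct Multiplicative

/-- `τⱼ ∈ ℚ^C`: `τⱼ(cⁱ) = -1/j` for `i ≥ 0` and `0` for `i < 0`. -/
def tau (j : ℤ) : Multiplicative ℤ → Multiplicative ℚ :=
  fun i => if 0 ≤ i.toAdd then ofAdd (-(1 / (j : ℚ))) else 1

/-- `φₙ ∈ ℚ^C`: `φₙ(cⁱ) = 1/n` for `i = 0` and `0` otherwise. -/
def phi (n : ℤ) : Multiplicative ℤ → Multiplicative ℚ :=
  fun i => if i.toAdd = 0 then ofAdd (1 / (n : ℚ)) else 1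

/-- The element `α` of the base group `(ℚ Wr C)^Z` of `W = (ℚ Wr C) Wr Z`:
`α(z^j) = 1` for `j < 0`, `α(z⁰) = c`, `α(z^j) = τⱼ` for `j > 0`. -/
def alpha : Multiplicative ℤ → Wr (Multiplicative ℚ) (Multiplicative ℤ) :=
  fun j =>
    if j.toAdd = 0 then inr (ofAdd (1 : ℤ))
    else if 0 < j.toAdd then inl (tau j.toAdd)
    else 1

/-!
Conjugation by `z^{-n}` shifts `α` by `n`, so the commutator at `z^j` is the commutator of
`α(z^{j+n})` and `α(z^j)` in `ℚ Wr C`. For `j < 0` the second entry is trivial, for `j > 0` both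
entries lie in the abelian base `ℚ^C`, and for `j = 0` the commutator `[τₙ, c]` is `τₙ⁻¹` times
the shift of `τₙ` by `c`: a step function minus its translate, i.e. the point mass `φₙ`.
-/

theorem SemidirectProduct.inr_inv_mul_inl_mul_inr {N G : Type*} [Group N] [Group G]
    {φ : G →* MulAut N} (g : G) (n : N) :
    (inr g)⁻¹ * inl n * inr g = (inl (φ g⁻¹ n) : N ⋊[φ] G) := by
  rw [inl_aut, inv_inv, map_inv]

theorem wrAct_apply {A B : Type*} [Group A] [Group B] (b : B) (f : B → A) (x : B) :
    wrAct A B b f x = f (x * b) :=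
  rfl

theorem inv_mul_inv_mul_mul_eq_one_of_commute {G : Type*} [Group G] {a b : G}
    (h : Commute a b) : a⁻¹ * b⁻¹ * a * b = 1 := by
  rw [h.inv_inv.eq]
  group

theorem alpha_of_neg {j : ℤ} (hj : j < 0) : alpha (ofAdd j) = 1 := by
  simp [alpha, hj.ne, hj.not_gt]

theorem alpha_zero : alpha (ofAdd 0) = inr (ofAdd 1) := by
  simp [alpha]

theorem alpha_of_pos {j : ℤ} (hj : 0 < j) : alpha (ofAdd j) = inl (tau j) := by
  simp [alpha, hj.ne', hj]

theorem tau_inv_mul_tau_shift (n : ℤ) (i : Multiplicative ℤ) :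
    (tau n i)⁻¹ * tau n (i * ofAdd (-1)) = phi n i := by
  induction i using Multiplicative.rec with
  | ofAdd k =>
    simp only [tau, phi, ← ofAdd_add, toAdd_ofAdd]
    split_ifs <;> first | (exfalso; omega) | simp

theorem inl_tau_inv_mul_inr_inv_mul_inl_tau_mul_inr (n : ℤ) :
    (inl (tau n))⁻¹ * (inr (ofAdd 1))⁻¹ * inl (tau n) * inr (ofAdd 1) =
      (inl (phi n) : Wr (Multiplicative ℚ) (Multiplicative ℤ)) := by
  rw [mul_assoc, mul_assoc, ← mul_assoc (inr _)⁻¹, inr_inv_mul_inl_mul_inr, ← map_inv, ← map_mul]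
  congr 1
  funext i
  exact tau_inv_mul_tau_shift n i

/-- For every `n > 0` and `j ∈ ℤ`, the commutator
`[α^{z^{-n}}, α] = (α^{z^{-n}})⁻¹ α⁻¹ α^{z^{-n}} α` (with `α^{z^{-n}}` the
conjugate of `α` by `z^{-n}`) evaluated at `z^j` equals `φₙ` if `j = 0` and `1`
otherwise. -/
theorem commutator_alpha_conj_alpha_eval (n : ℤ) (hn : 0 < n) (j : ℤ) :
    ((((inr (ofAdd (-n)) : Wr (Wr (Multiplicative ℚ) (Multiplicative ℤ))
            (Multiplicative ℤ))⁻¹ * inl alpha * inr (ofAdd (-n)))⁻¹ *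
        (inl alpha)⁻¹ *
        ((inr (ofAdd (-n)))⁻¹ * inl alpha * inr (ofAdd (-n))) *
        inl alpha).left (ofAdd j)) =
      if j = 0 then inl (phi n) else 1 := by
  rw [inr_inv_mul_inl_mul_inr]
  simp only [← map_inv inl, ← map_mul inl, left_inl, Pi.mul_apply, Pi.inv_apply, wrAct_apply,
    ← ofAdd_neg, ← ofAdd_add, neg_neg]
  rcases lt_trichotomy j 0 with hj | rfl | hj
  · rw [alpha_of_neg hj, if_neg hj.ne]
    group
  · rw [zero_add, alpha_of_pos hn, alpha_zero, if_pos rfl]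
    exact inl_tau_inv_mul_inr_inv_mul_inl_tau_mul_inr n
  · rw [alpha_of_pos hj, alpha_of_pos (by omega), if_neg hj.ne']
    exact inv_mul_inv_mul_mul_eq_one_of_commute
      (Commute.all (tau (j + n)) (tau j) |>.map inl)
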